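/- The explicit saturation update of the IMPES scheme, s = š + (τ/φ)(Q_in(1 - š) - Q_out š) with φ, τ > 0, Q_in, Q_out ≥ 0, preserves the bounds 0 ≤ s ≤ 1 provided 0 ≤ š ≤ 1 and the CFL-type condition τ max(Q_in, Q_out) ≤ φ holds. -/

import Mathlib

/-! The new saturation is `(1 - b) š + a (1 - š)` and its complement is `(1 - a)(1 - š) + b š`,
with `a = τ Q_in / φ` and `b = τ Q_out / φ`; the CFL condition puts `a` and `b` in `[0, 1]`, so
both expressions are sums of products of nonnegative numbers. -/

lemma add_mul_one_sub_sub_mul_mem_Icc {a b x : ℝ} (ha : a ∈ Set.Icc (0 : ℝ) 1)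
    (hb : b ∈ Set.Icc (0 : ℝ) 1) (hx : x ∈ Set.Icc (0 : ℝ) 1) :
    x + a * (1 - x) - b * x ∈ Set.Icc (0 : ℝ) 1 := by
  obtain ⟨ha0, ha1⟩ := ha
  obtain ⟨hb0, hb1⟩ := hb
  obtain ⟨hx0, hx1⟩ := hx
  have hx' : 0 ≤ 1 - x := sub_nonneg.mpr hx1
  constructor
  · calc (0 : ℝ) ≤ (1 - b) * x + a * (1 - x) := by
          have := mul_nonneg (sub_nonneg.mpr hb1) hx0
          have := mul_nonneg ha0 hx'
          linarith
      _ = x + a * (1 - x) - b * x := by ring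
  · rw [← sub_nonneg]
    calc (0 : ℝ) ≤ (1 - a) * (1 - x) + b * x := by
          have := mul_nonneg (sub_nonneg.mpr ha1) hx'
          have := mul_nonneg hb0 hx0
          linarith
      _ = 1 - (x + a * (1 - x) - b * x) := by ring

lemma div_mul_mem_Icc_of_mul_le {φ τ Q : ℝ} (hφ : 0 < φ) (hτ : 0 ≤ τ) (hQ : 0 ≤ Q)
    (h : τ * Q ≤ φ) : τ / φ * Q ∈ Set.Icc (0 : ℝ) 1 := by
  rw [div_mul_eq_mul_div]
  exact ⟨div_nonneg (mul_nonneg hτ hQ) hφ.le, div_le_one_of_le₀ h hφ.le⟩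

theorem impes_saturation_bounds (φ τ Qin Qout sPrev : ℝ)
    (hφ : 0 < φ) (hτ : 0 < τ) (hin : 0 ≤ Qin) (hout : 0 ≤ Qout)
    (hs0 : 0 ≤ sPrev) (hs1 : sPrev ≤ 1)
    (hcfl_in : τ * Qin ≤ φ) (hcfl_out : τ * Qout ≤ φ) :
    0 ≤ sPrev + (τ/φ) * (Qin * (1 - sPrev) - Qout * sPrev) ∧
    sPrev + (τ/φ) * (Qin * (1 - sPrev) - Qout * sPrev) ≤ 1 := by
  have hupdate : sPrev + (τ/φ) * (Qin * (1 - sPrev) - Qout * sPrev)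
      = sPrev + τ / φ * Qin * (1 - sPrev) - τ / φ * Qout * sPrev := by ring
  rw [hupdate]
  exact add_mul_one_sub_sub_mul_mem_Icc
    (div_mul_mem_Icc_of_mul_le hφ hτ.le hin hcfl_in)
    (div_mul_mem_Icc_of_mul_le hφ hτ.le hout hcfl_out) ⟨hs0, hs1⟩
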